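/- arXiv:math/0503401 — 3 statements merged into one kernel-verified Lean document; each statement's English description precedes it below -/
import Mathlib

section
/- For positive integers p ≥ 2 and prime q ∤ p, with a_n = p^(q^(n-1)(q-1)) − 1, the quality log(a_n + 1) / log(rad(a_n(a_n+1))) tends to a limit ≥ 1 and exceeds 1 + (n−1)·log q / log a_n − o(1); more modestly: rad(a_n · (a_n + 1)) ≤ (a_n+1) · a_n / q^(n−1). -/
/-- The radical of a positive integer: the product of its distinct prime factors. -/
def rad (n : ℕ) : ℕ := ∏ p ∈ n.primeFactors, p

lemma rad_dvd (n : ℕ) : rad n ∣ n := Nat.prod_primeFactors_dvd n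

lemma rad_mul_pow_dvd {q n a : ℕ} (hq : q.Prime) (ha : a ≠ 0) (hd : q ^ n ∣ a) (hn : 1 ≤ n) :
    rad a * q ^ (n - 1) ∣ a := by
  have hqa : q ∈ a.primeFactors := by
    rw [Nat.mem_primeFactors]
    exact ⟨hq, dvd_trans (dvd_pow_self q (Nat.one_le_iff_ne_zero.mp hn)) hd, ha⟩
  have hsplit : rad a = q * ∏ r ∈ a.primeFactors.erase q, r :=
    (Finset.mul_prod_erase _ (fun r => r) hqa).symm
  have hqq : q * q ^ (n - 1) = q ^ n := by
    rw [← pow_succ', Nat.sub_add_cancel hn]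
  have hform : rad a * q ^ (n - 1) = q ^ n * ∏ r ∈ a.primeFactors.erase q, r := by
    rw [hsplit, mul_right_comm, hqq]
  rw [hform]
  have hcop : Nat.Coprime (q ^ n) (∏ r ∈ a.primeFactors.erase q, r) := by
    apply Nat.Coprime.pow_left
    apply Nat.Coprime.prod_right
    intro r hr
    have hrp : r.Prime := Nat.prime_of_mem_primeFactors (Finset.mem_of_mem_erase hr)
    exact (Nat.coprime_primes hq hrp).mpr (Finset.ne_of_mem_erase hr).symm
  refine hcop.mul_dvd_of_dvd_of_dvd hd ?_
  exact dvd_trans (Finset.prod_dvd_prod_of_subset _ _ _ (Finset.erase_subset _ _))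
    (Nat.prod_primeFactors_dvd a)

theorem stmt_13 (p q n : ℕ) (hp : 2 ≤ p) (hq : q.Prime) (hpq : Nat.gcd p q = 1)
    (hn : 1 ≤ n) (a : ℕ) (ha : a = p ^ (q ^ (n - 1) * (q - 1)) - 1) :
    rad (a * (a + 1)) * q ^ (n - 1) ≤ p * a := by
  set e := q ^ (n - 1) * (q - 1) with he
  have hq2 := hq.two_le
  have he1 : 1 ≤ e := by
    have h1 : 1 ≤ q ^ (n - 1) := Nat.one_le_pow _ _ (by omega)
    have h2 : 1 ≤ q - 1 := by omega
    calc 1 = 1 * 1 := by ring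
    _ ≤ e := Nat.mul_le_mul h1 h2
  have hpe : 2 ≤ p ^ e := le_trans hp (Nat.le_self_pow (by omega) p)
  have hap : a + 1 = p ^ e := by omega
  have ha0 : a ≠ 0 := by omega
  have hqn : q ^ n ∣ a := by
    have hcop : Nat.Coprime p (q ^ n) := (Nat.coprime_iff_gcd_eq_one.mpr hpq).pow_right n
    have h := Nat.ModEq.pow_totient hcop
    rw [Nat.totient_prime_pow hq (by omega), ← he] at h
    have := (Nat.modEq_iff_dvd' (by omega : 1 ≤ p ^ e)).mp h.symm
    rwa [ha]
  have key := rad_mul_pow_dvd hq ha0 hqn hn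
  have h1 : rad a * q ^ (n - 1) ≤ a := Nat.le_of_dvd (by omega) key
  have hsplit : rad (a * (a + 1)) = rad a * rad (a + 1) := by
    unfold rad
    have hcop : Nat.Coprime a (a + 1) := by
      rw [add_comm]
      exact (Nat.coprime_add_self_right (m := a) (n := 1)).mpr (Nat.coprime_one_right a)
    rw [Nat.primeFactors_mul ha0 (by omega), Finset.prod_union hcop.disjoint_primeFactors]
  have h2 : rad (a + 1) ≤ p := by
    have : rad (a + 1) = rad p := by
      unfold rad
      rw [hap, Nat.primeFactors_pow p (by omega)]
    rw [this]
    exact Nat.le_of_dvd (by omega) (rad_dvd p)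
  calc rad (a * (a + 1)) * q ^ (n - 1) = (rad a * q ^ (n - 1)) * rad (a + 1) := by
        rw [hsplit]; ring
    _ ≤ a * p := Nat.mul_le_mul h1 h2
    _ = p * a := mul_comm _ _
end

section
/- Assume the abc conjecture with ε = 1/2 and constant C: every coprime triple a + b = c satisfies c ≤ C·rad(abc)^(3/2). Then the equation x^k + y^m = z^n in coprime positive integers x, y, z ≥ 2 with 1/k + 1/m + 1/n < 1/2 has max(x^k, y^m, z^n) bounded by a constant depending only on C. -/
lemma rad_le_self {n : ℕ} (hn : n ≠ 0) : rad n ≤ n :=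
  Nat.le_of_dvd (Nat.pos_of_ne_zero hn) (Nat.prod_primeFactors_dvd n)

lemma rad_pow_mul_pow_mul_pow {x y z k m n : ℕ} (hx : x ≠ 0) (hy : y ≠ 0) (hz : z ≠ 0)
    (hk : k ≠ 0) (hm : m ≠ 0) (hn : n ≠ 0) :
    rad (x ^ k * y ^ m * z ^ n) = rad (x * y * z) := by
  rw [rad, rad, Nat.primeFactors_mul (by positivity) (by positivity),
    Nat.primeFactors_mul (by positivity) (by positivity),
    Nat.primeFactors_mul (by positivity) hz, Nat.primeFactors_mul hx hy,
    Nat.primeFactors_pow _ hk, Nat.primeFactors_pow _ hm, Nat.primeFactors_pow _ hn]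

lemma le_rpow_inv_of_pow_le {a M : ℝ} {k : ℕ} (ha : 0 ≤ a) (hk : k ≠ 0) (h : a ^ k ≤ M) :
    a ≤ M ^ (k⁻¹ : ℝ) :=
  calc a = (a ^ k) ^ (k⁻¹ : ℝ) := (Real.pow_rpow_inv_natCast ha hk).symm
    _ ≤ M ^ (k⁻¹ : ℝ) := by gcongr

lemma le_pow_of_le_mul_rpow {M C : ℝ} {n : ℕ} (hn : n ≠ 0) (hM : 0 < M)
    (h : M ≤ C * M ^ (1 - (n⁻¹ : ℝ))) : M ≤ C ^ n := by
  have hroot : M ^ (n⁻¹ : ℝ) ≤ C := by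
    have hsplit : M = M ^ (n⁻¹ : ℝ) * M ^ (1 - (n⁻¹ : ℝ)) := by
      rw [← Real.rpow_add hM, add_sub_cancel, Real.rpow_one]
    nth_rewrite 1 [hsplit] at h
    exact le_of_mul_le_mul_right h (by positivity)
  calc M = (M ^ (n⁻¹ : ℝ)) ^ n := (Real.rpow_inv_natCast_pow hM.le hn).symm
    _ ≤ C ^ n := by gcongr

lemma rad_le_rpow_of_pow_add_pow_eq_pow {x y z k m n : ℕ} (hx : x ≠ 0) (hy : y ≠ 0)
    (hz : z ≠ 0) (hk : k ≠ 0) (hm : m ≠ 0) (hn : n ≠ 0) (h : x ^ k + y ^ m = z ^ n) :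
    (rad (x ^ k * y ^ m * z ^ n) : ℝ) ≤ ((z : ℝ) ^ n) ^ ((k : ℝ)⁻¹ + (m : ℝ)⁻¹ + (n : ℝ)⁻¹) := by
  have hxz : (x : ℝ) ^ k ≤ (z : ℝ) ^ n := by exact_mod_cast (by omega : x ^ k ≤ z ^ n)
  have hyz : (y : ℝ) ^ m ≤ (z : ℝ) ^ n := by exact_mod_cast (by omega : y ^ m ≤ z ^ n)
  calc (rad (x ^ k * y ^ m * z ^ n) : ℝ) = rad (x * y * z) := by
        rw [rad_pow_mul_pow_mul_pow hx hy hz hk hm hn]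
    _ ≤ x * y * z := by exact_mod_cast rad_le_self (by positivity)
    _ ≤ ((z : ℝ) ^ n) ^ (k⁻¹ : ℝ) * ((z : ℝ) ^ n) ^ (m⁻¹ : ℝ) * ((z : ℝ) ^ n) ^ (n⁻¹ : ℝ) := by
        gcongr
        · exact le_rpow_inv_of_pow_le (by positivity) hk hxz
        · exact le_rpow_inv_of_pow_le (by positivity) hm hyz
        · exact le_rpow_inv_of_pow_le (by positivity) hn le_rfl
    _ = ((z : ℝ) ^ n) ^ ((k : ℝ)⁻¹ + (m : ℝ)⁻¹ + (n : ℝ)⁻¹) := by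
        rw [Real.rpow_add' (by positivity), Real.rpow_add' (by positivity)] <;> positivity

theorem stmt_15 (C : ℝ) (hC : 0 < C)
    (abc : ∀ a b c : ℕ, 0 < a → 0 < b → a + b = c → Nat.gcd a b = 1 →
      (c : ℝ) ≤ C * (rad (a * b * c) : ℝ) ^ ((3 : ℝ) / 2)) :
    ∃ B : ℝ, ∀ x y z k m n : ℕ, 2 ≤ x → 2 ≤ y → 2 ≤ z →
      0 < k → 0 < m → 0 < n →
      Nat.gcd x y = 1 →
      (1 : ℝ) / k + 1 / m + 1 / n < 1 / 2 →
      x ^ k + y ^ m = z ^ n →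
      (max (x ^ k) (max (y ^ m) (z ^ n)) : ℝ) ≤ B := by
  refine ⟨C ^ 4, fun x y z k m n hx hy hz hk hm hn hxy hs heq => ?_⟩
  simp only [one_div] at hs
  set M : ℝ := (z : ℝ) ^ n with hM_def
  have hM : 1 ≤ M := one_le_pow₀ (by norm_cast; omega)
  have hMC : M ≤ C * M ^ (1 - ((4 : ℕ) : ℝ)⁻¹) :=
    calc M ≤ C * (rad (x ^ k * y ^ m * z ^ n) : ℝ) ^ ((3 : ℝ) / 2) := by
          rw [hM_def]
          exact_mod_cast abc _ _ _ (by positivity) (by positivity) heq (Nat.Coprime.pow k m hxy)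
      _ ≤ C * (M ^ ((k : ℝ)⁻¹ + (m : ℝ)⁻¹ + (n : ℝ)⁻¹)) ^ ((3 : ℝ) / 2) := by
          gcongr
          exact rad_le_rpow_of_pow_add_pow_eq_pow (by omega) (by omega) (by omega)
            hk.ne' hm.ne' hn.ne' heq
      _ = C * M ^ (((k : ℝ)⁻¹ + (m : ℝ)⁻¹ + (n : ℝ)⁻¹) * (3 / 2)) := by
          rw [← Real.rpow_mul (by positivity)]
      _ ≤ C * M ^ (1 - ((4 : ℕ) : ℝ)⁻¹) := by
          gcongr
          norm_num
          linarith
  have hMB : M ≤ C ^ 4 := le_pow_of_le_mul_rpow four_ne_zero (by positivity) hMC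
  have hxz : (x : ℝ) ^ k ≤ M := by rw [hM_def]; exact_mod_cast (by omega : x ^ k ≤ z ^ n)
  have hyz : (y : ℝ) ^ m ≤ M := by rw [hM_def]; exact_mod_cast (by omega : y ^ m ≤ z ^ n)
  exact max_le (hxz.trans hMB) (max_le (hyz.trans hMB) hMB)
end

section
/- For every integer p ≥ 2 and prime q not dividing p, the quality of the triple (a, b, c) = (p^(q^(n-1)(q-1)) − 1, 1, p^(q^(n-1)(q-1))), namely log c / log rad(abc), is at least log c / (log p + log a − (n−1) log q); consequently for fixed p, q the quality can be made arbitrarily close to any value below the limit as n grows, and in particular exceeds 1 for all sufficiently large n. -/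
/-!
Since `q ∤ p`, Euler's theorem gives `q ^ n ∣ a = p ^ φ(q ^ n) - 1`, and `φ(q ^ n) = q ^ (n-1) (q-1)`.
The factor `q ^ n` of `a` contributes only `q` to the radical and `c = p ^ φ(q ^ n)` contributes at
most `p`, so `rad (a c) · q ^ (n-1) ≤ a p`. Taking logarithms gives the bound on the quality, and
once `q ^ (n-1) > p` it gives `rad (a c) < a < c`, i.e. quality `> 1`.
-/

open Real UniqueFactorizationMonoid
open scoped Nat

lemma rad_eq_radical (n : ℕ) : rad n = radical n := Nat.radical_eq_prod_primeFactors.symm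

namespace Nat

theorem dvd_pow_totient_sub_one {p k : ℕ} (h : p.Coprime k) : k ∣ p ^ φ k - 1 := by
  rcases p.eq_zero_or_pos with rfl | hp
  · simp [(coprime_zero_left k).mp h]
  · exact (modEq_iff_dvd' (one_le_pow _ _ hp)).mp (ModEq.pow_totient h).symm

theorem radical_mul_pow_dvd {a q n : ℕ} (hq : q.Prime) (h : q ^ (n + 1) ∣ a) :
    radical a * q ^ n ∣ a := by
  obtain ⟨m, rfl⟩ := h
  have hrad : radical (q ^ (n + 1) * m) ∣ q * m := by
    refine radical_mul_dvd.trans (mul_dvd_mul ?_ radical_dvd_self)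
    rw [radical_pow_of_prime hq.prime n.succ_ne_zero, normalize_eq]
  calc radical (q ^ (n + 1) * m) * q ^ n ∣ q * m * q ^ n := mul_dvd_mul_right hrad _
    _ = q ^ (n + 1) * m := by ring

theorem radical_mul_pow_mul_pow_dvd {a p q n t : ℕ} (hq : q.Prime) (h : q ^ (n + 1) ∣ a) :
    radical (a * p ^ t) * q ^ n ∣ a * p :=
  calc radical (a * p ^ t) * q ^ n ∣ radical a * q ^ n * p := by
        rw [mul_right_comm]
        exact mul_dvd_mul_right (radical_mul_dvd.trans
          (mul_dvd_mul_left _ (radical_pow_dvd.trans radical_dvd_self))) _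
    _ ∣ a * p := mul_dvd_mul_right (radical_mul_pow_dvd hq h) _

end Nat

theorem Real.log_add_mul_log_le_of_mul_pow_le {x y z k : ℕ} (hx : 0 < x) (hy : 0 < y)
    (h : x * y ^ k ≤ z) : log x + k * log y ≤ log z := by
  rw [← log_pow, ← log_mul (by positivity) (by positivity)]
  exact log_le_log (by positivity) (by exact_mod_cast h)

theorem rad_mul_pow_le {p q n a c : ℕ} (hp : 2 ≤ p) (hq : q.Prime) (hpq : ¬ q ∣ p)
    (hn : 1 ≤ n) (ha : a = p ^ (q ^ (n - 1) * (q - 1)) - 1) (hc : c = a + 1) :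
    0 < a ∧ rad (a * 1 * c) * q ^ (n - 1) ≤ a * p := by
  rw [← Nat.totient_prime_pow hq hn] at ha
  have hpow : 1 < p ^ φ (q ^ n) := Nat.one_lt_pow (Nat.totient_pos.2 (pow_pos hq.pos n)).ne' hp
  have hc' : c = p ^ φ (q ^ n) := by omega
  refine ⟨by omega, ?_⟩
  obtain ⟨k, rfl⟩ := Nat.exists_eq_add_of_le' hn
  have hcop : p.Coprime (q ^ (k + 1)) := ((hq.coprime_iff_not_dvd.mpr hpq).symm).pow_right _
  rw [hc', mul_one, rad_eq_radical, Nat.add_sub_cancel, ha]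
  exact Nat.le_of_dvd (Nat.mul_pos (by omega) (by omega))
    (Nat.radical_mul_pow_mul_pow_dvd hq (Nat.dvd_pow_totient_sub_one hcop))

theorem stmt_19 (p q : ℕ) (hp : 2 ≤ p) (hq : q.Prime) (hpq : ¬ q ∣ p) :
    (∀ n : ℕ, 1 ≤ n →
      ∀ a c : ℕ, a = p ^ (q ^ (n - 1) * (q - 1)) - 1 → c = a + 1 →
        Real.log c / Real.log (rad (a * 1 * c))
          ≥ Real.log c / (Real.log p + Real.log a - (n - 1 : ℝ) * Real.log q)) ∧
    (∃ N : ℕ, ∀ n : ℕ, N ≤ n →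
      ∀ a c : ℕ, a = p ^ (q ^ (n - 1) * (q - 1)) - 1 → c = a + 1 →
        1 < Real.log c / Real.log (rad (a * 1 * c))) := by
  have one_lt_rad {a c : ℕ} (ha : 0 < a) (hc : c = a + 1) : 1 < rad (a * 1 * c) := by
    rw [rad_eq_radical, Nat.one_lt_radical_iff]
    nlinarith
  refine ⟨fun n hn a c ha hc => ?_, p + 1, fun n hn a c ha hc => ?_⟩
  · obtain ⟨ha0, hle⟩ := rad_mul_pow_le hp hq hpq hn ha hc
    have hR := one_lt_rad ha0 hc
    have hlog := Real.log_add_mul_log_le_of_mul_pow_le (by omega) hq.pos hle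
    rw [Nat.cast_mul, Real.log_mul (by positivity) (by positivity), Nat.cast_pred hn] at hlog
    refine div_le_div_of_nonneg_left (Real.log_nonneg (by norm_cast; omega))
      (Real.log_pos (by exact_mod_cast hR)) (by linarith)
  · obtain ⟨ha0, hle⟩ := rad_mul_pow_le hp hq hpq (by omega) ha hc
    have hR := one_lt_rad ha0 hc
    have hpq' : p < q ^ (n - 1) :=
      (Nat.lt_pow_self hq.one_lt).trans_le (Nat.pow_le_pow_right hq.pos (by omega))
    have hRa : rad (a * 1 * c) < a :=
      lt_of_mul_lt_mul_right (hle.trans_lt (Nat.mul_lt_mul_of_pos_left hpq' ha0)) (Nat.zero_le _)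
    rw [one_lt_div (Real.log_pos (by exact_mod_cast hR))]
    exact Real.log_lt_log (by positivity) (by exact_mod_cast (by omega : rad (a * 1 * c) < c))
end
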